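/- arXiv:2401.00313 — 4 statements merged into one kernel-verified Lean document; each statement's English description precedes it below -/
import Mathlib

section
/- Let G = (V,E) be a Δ-regular simple graph with the user-creator correspondence above (edges as users, vertices as creators, K = 1, ā = Δ, each happy user-creator pair having engagement ebar). Then for every stable set corresponding to an independent set S ⊆ V, the total engagement equals ebar · Δ · |S|. Consequently, the maximum total engagement over all stable sets is ebar · Δ · α(G), where α(G) is the independence number of G. -/
variable {V : Type*} [Fintype V] [DecidableEq V]

/-- A stable set with `K = 1`: a set `S` of creators (vertices) together with an
assignment `f` of users (edges) to incident creators in `S`, such that every creator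
in `S` receives at least `abar` users. -/
def StableConfig (G : SimpleGraph V) [DecidableRel G.Adj] (abar : ℕ)
    (S : Finset V) (f : Sym2 V → Option V) : Prop :=
  (∀ (e : Sym2 V) (v : V), f e = some v → e ∈ G.edgeFinset ∧ v ∈ e ∧ v ∈ S) ∧
  (∀ v ∈ S, abar ≤ (G.edgeFinset.filter (fun e => f e = some v)).card)

/-- Total engagement: each assigned user-creator pair contributes `ebar`. -/
def engagementOf (G : SimpleGraph V) [DecidableRel G.Adj] (ebar : ℝ)
    (f : Sym2 V → Option V) : ℝ :=
  ebar * ((G.edgeFinset.filter (fun e => (f e).isSome = true)).card : ℝ)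

/-- The independence number `α(G)`. -/
noncomputable def indepNum (G : SimpleGraph V) : ℕ :=
  sSup {n : ℕ | ∃ S : Finset V, (∀ u ∈ S, ∀ w ∈ S, ¬ G.Adj u w) ∧ S.card = n}

/-!
Since `G` is `Δ`-regular, a creator `v` can receive `Δ` users only if it receives every edge at
`v`. Two creators of a stable set therefore cannot be adjacent (their common edge would go to
both), every creator receives exactly `Δ` users, and the engagement is `ebar · Δ · |S|`.
Conversely, on an independent set `S` every edge has at most one endpoint in `S`, so assigning
each edge to that endpoint is a stable set with creator set `S`. Maximising `|S|` gives `α(G)`.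
-/

open Finset

theorem indepNum_eq_indepNum {α : Type*} (G : SimpleGraph α) : indepNum G = G.indepNum := by
  unfold indepNum SimpleGraph.indepNum
  congr! 3 with n
  refine exists_congr fun S => ?_
  rw [SimpleGraph.isNIndepSet_iff, SimpleGraph.isIndepSet_iff]
  refine and_congr_left fun _ => ⟨fun h u hu w hw _ => h u hu w hw, fun h u hu w hw => ?_⟩
  by_cases huw : u = w
  · exact huw ▸ G.loopless.irrefl u
  · exact h hu hw huw

namespace StableConfig

variable {G : SimpleGraph V} [DecidableRel G.Adj] {abar : ℕ} {S : Finset V}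
  {f : Sym2 V → Option V}

theorem filter_eq_incidenceFinset (h : StableConfig G abar S f) {v : V} (hv : v ∈ S)
    (hdeg : G.degree v ≤ abar) :
    {e ∈ G.edgeFinset | f e = some v} = G.incidenceFinset v := by
  refine eq_of_subset_of_card_le (fun e he => ?_) ?_
  · obtain ⟨he, hve, -⟩ := h.1 e v (mem_filter.mp he).2
    exact (G.mem_incidenceFinset v e).mpr ⟨SimpleGraph.mem_edgeFinset.mp he, hve⟩
  · rw [G.card_incidenceFinset_eq_degree]
    exact hdeg.trans (h.2 v hv)

theorem isIndepSet (h : StableConfig G abar S f) (hdeg : ∀ v ∈ S, G.degree v ≤ abar) :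
    G.IsIndepSet S := by
  intro u hu w hw huw hadj
  have assigned_to {x : V} (hx : x ∈ S) (hxe : x ∈ s(u, w)) : f s(u, w) = some x := by
    have he : s(u, w) ∈ G.incidenceFinset x := (G.mem_incidenceFinset x _).mpr ⟨hadj, hxe⟩
    rw [← h.filter_eq_incidenceFinset hx (hdeg x hx)] at he
    exact (mem_filter.mp he).2
  exact huw (Option.some_injective _ <|
    (assigned_to hu (Sym2.mem_mk_left u w)).symm.trans (assigned_to hw (Sym2.mem_mk_right u w)))

theorem card_assigned (h : StableConfig G abar S f) :
    #{e ∈ G.edgeFinset | (f e).isSome} = ∑ v ∈ S, #{e ∈ G.edgeFinset | f e = some v} := by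
  have assigned_eq_biUnion : {e ∈ G.edgeFinset | (f e).isSome} =
      S.biUnion fun v => {e ∈ G.edgeFinset | f e = some v} := by
    ext e
    simp only [mem_biUnion, mem_filter, Option.isSome_iff_exists]
    exact ⟨fun ⟨he, v, hv⟩ => ⟨v, (h.1 e v hv).2.2, he, hv⟩, fun ⟨v, _, he, hv⟩ => ⟨he, v, hv⟩⟩
  rw [assigned_eq_biUnion, card_biUnion]
  intro u _ w _ huw
  refine disjoint_left.mpr fun e hu hw => huw ?_
  exact Option.some_injective _ ((mem_filter.mp hu).2.symm.trans (mem_filter.mp hw).2)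

theorem engagementOf_eq {Δ : ℕ} (h : StableConfig G Δ S f) (hreg : G.IsRegularOfDegree Δ)
    (ebar : ℝ) : engagementOf G ebar f = ebar * Δ * #S := by
  have card_eq (v : V) (hv : v ∈ S) : #{e ∈ G.edgeFinset | f e = some v} = Δ := by
    rw [h.filter_eq_incidenceFinset hv (hreg v).le, G.card_incidenceFinset_eq_degree, hreg v]
  rw [engagementOf, h.card_assigned, sum_congr rfl card_eq, sum_const, smul_eq_mul]
  push_cast
  ring

end StableConfig

open Classical in
noncomputable def indepAssignment (G : SimpleGraph V) (S : Finset V) (e : Sym2 V) :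
    Option V :=
  if h : e ∈ G.edgeSet ∧ ∃ v ∈ S, v ∈ e then some h.2.choose else none

theorem stableConfig_indepAssignment {G : SimpleGraph V} [DecidableRel G.Adj] {abar : ℕ}
    {S : Finset V} (hS : G.IsIndepSet S) (hdeg : ∀ v ∈ S, abar ≤ G.degree v) :
    StableConfig G abar S (indepAssignment G S) := by
  have assigned_to {e : Sym2 V} (he : e ∈ G.edgeSet) {v : V} (hv : v ∈ S) (hve : v ∈ e) :
      indepAssignment G S e = some v := by
    have hex : e ∈ G.edgeSet ∧ ∃ v ∈ S, v ∈ e := ⟨he, v, hv, hve⟩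
    obtain ⟨hw, hwe⟩ := hex.2.choose_spec
    rw [indepAssignment, dif_pos hex, Option.some_inj]
    by_contra hne
    rw [(Sym2.mem_and_mem_iff hne).mp ⟨hwe, hve⟩] at he
    exact hS hw hv hne he
  refine ⟨fun e v hev => ?_, fun v hv => ?_⟩
  · rw [indepAssignment] at hev
    split_ifs at hev with hex
    obtain ⟨hv, hve⟩ := hex.2.choose_spec
    cases hev
    exact ⟨SimpleGraph.mem_edgeFinset.mpr hex.1, hve, hv⟩
  · refine (hdeg v hv).trans ?_
    rw [← G.card_incidenceFinset_eq_degree]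
    refine card_le_card fun e he => ?_
    obtain ⟨he, hve⟩ := (G.mem_incidenceFinset v e).mp he
    exact mem_filter.mpr ⟨SimpleGraph.mem_edgeFinset.mpr he, assigned_to he hv hve⟩

theorem stmt4_general (G : SimpleGraph V) [DecidableRel G.Adj] (Δ : ℕ)
    (hreg : G.IsRegularOfDegree Δ) (ebar : ℝ) (hebar : 0 ≤ ebar) :
    (∀ (S : Finset V) (f : Sym2 V → Option V), StableConfig G Δ S f →
        engagementOf G ebar f = ebar * Δ * S.card) ∧
    IsGreatest {E : ℝ | ∃ (S : Finset V) (f : Sym2 V → Option V),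
        StableConfig G Δ S f ∧ engagementOf G ebar f = E}
      (ebar * Δ * (indepNum G)) := by
  refine ⟨fun S f h => h.engagementOf_eq hreg ebar, ?_, ?_⟩
  · obtain ⟨S, hS⟩ := G.exists_isNIndepSet_indepNum
    have h := stableConfig_indepAssignment hS.isIndepSet fun v _ => (hreg v).ge
    exact ⟨S, _, h, by rw [h.engagementOf_eq hreg, hS.card_eq, indepNum_eq_indepNum]⟩
  · rintro _ ⟨S, f, h, rfl⟩
    rw [h.engagementOf_eq hreg, indepNum_eq_indepNum]
    gcongr
    exact (h.isIndepSet fun v _ => (hreg v).le).card_le_indepNum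

/-- In the reduction from a `Δ`-regular graph (edges as users, vertices as creators,
`K = 1`, `ā = Δ`, every happy pair having engagement `ebar`): every stable set with
creator set `S` has total engagement `ebar · Δ · |S|`, and the maximum total engagement
over all stable sets equals `ebar · Δ · α(G)`. -/
theorem stmt4 (G : SimpleGraph V) [DecidableRel G.Adj] (Δ : ℕ) (hΔ : 0 < Δ)
    (hreg : G.IsRegularOfDegree Δ) (ebar : ℝ) (hebar : 0 ≤ ebar) :
    (∀ (S : Finset V) (f : Sym2 V → Option V), StableConfig G Δ S f →
        engagementOf G ebar f = ebar * Δ * S.card) ∧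
    IsGreatest {E : ℝ | ∃ (S : Finset V) (f : Sym2 V → Option V),
        StableConfig G Δ S f ∧ engagementOf G ebar f = E}
      (ebar * Δ * (indepNum G)) :=
  stmt4_general G Δ hreg ebar hebar
end

section
/- Consider C creators at positions X₁ ≤ ⋯ ≤ X_C on [0,1] (angular coordinates) with K < C, and a user at position y ∈ [0,1] assigned to the K creators nearest to y. Define regions R₁ = [0, (X₁+X_{K+1})/2], R_i = ((X_{i−1}+X_{i+K−1})/2, (X_i+X_{i+K})/2] for 2 ≤ i ≤ C−K, and R_{C−K+1} = ((X_{C−K}+X_C)/2, 1]. Then the user is assigned exactly to creators {i, i+1, …, i+K−1} if and only if y ∈ R_i. -/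
/-!
For creators `a, b` with `X a < X b`, `a` is strictly closer than `b` exactly when `y` lies
strictly left of their midpoint. So `A = {i, …, i+K-1}` forces `y` to lie
right of the midpoint of `X (i-1), X (i+K-1)` and left of that of `X i, X (i+K)`. Conversely, if
`A` differs from this window, equal cardinality gives `a ∈ A` outside the window and `b` inside
it but outside `A`; by monotonicity the midpoint of `X a, X b` is on the wrong side of `y`.
-/

lemma lt_midpoint_of_abs_sub_lt_abs_sub {a b y : ℝ} (hab : a < b) (h : |y - a| < |y - b|) :
    y < (a + b) / 2 := by
  have := sq_lt_sq.mpr h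
  nlinarith

lemma midpoint_lt_of_abs_sub_lt_abs_sub {a b y : ℝ} (hab : a < b) (h : |y - b| < |y - a|) :
    (a + b) / 2 < y := by
  have := sq_lt_sq.mpr h
  nlinarith

section NearestSet

variable {C K i a b : ℕ} {X : ℕ → ℝ} {y : ℝ} {A : Finset ℕ}

lemma lt_midpoint_of_mem_of_notMem
    (hnear : ∀ a ∈ A, ∀ b ∈ Finset.Icc 1 C, b ∉ A → |y - X a| < |y - X b|)
    (ha : a ∈ A) (hb : b ∈ Finset.Icc 1 C) (hbA : b ∉ A) (hab : X a < X b) :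
    y < (X a + X b) / 2 :=
  lt_midpoint_of_abs_sub_lt_abs_sub hab (hnear a ha b hb hbA)

lemma midpoint_lt_of_mem_of_notMem
    (hnear : ∀ a ∈ A, ∀ b ∈ Finset.Icc 1 C, b ∉ A → |y - X a| < |y - X b|)
    (ha : a ∈ A) (hb : b ∈ Finset.Icc 1 C) (hbA : b ∉ A) (hba : X b < X a) :
    (X b + X a) / 2 < y :=
  midpoint_lt_of_abs_sub_lt_abs_sub hba (hnear a ha b hb hbA)

lemma le_of_strictMono_Icc (hmono : ∀ i j : ℕ, 1 ≤ i → i < j → j ≤ C → X i < X j)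
    (ha : 1 ≤ a) (hab : a ≤ b) (hb : b ≤ C) : X a ≤ X b :=
  hab.eq_or_lt.elim (fun h => h ▸ le_rfl) fun h => (hmono a b ha h hb).le

lemma window_midpoints_of_eq_Icc (hK : 0 < K)
    (hmono : ∀ i j : ℕ, 1 ≤ i → i < j → j ≤ C → X i < X j)
    (hnear : ∀ a ∈ A, ∀ b ∈ Finset.Icc 1 C, b ∉ A → |y - X a| < |y - X b|)
    (hi : 1 ≤ i) (hi' : i ≤ C - K + 1) (hA : A = Finset.Icc i (i + K - 1)) :
    (1 < i → (X (i - 1) + X (i + K - 1)) / 2 < y) ∧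
      (i ≤ C - K → y ≤ (X i + X (i + K)) / 2) := by
  subst hA
  refine ⟨fun h1i => ?_, fun hiC => ?_⟩
  · refine midpoint_lt_of_mem_of_notMem hnear ?_ ?_ ?_
      (hmono _ _ (by omega) (by omega) (by omega)) <;> simp only [Finset.mem_Icc] <;> omega
  · refine (lt_midpoint_of_mem_of_notMem hnear ?_ ?_ ?_
      (hmono _ _ hi (by omega) (by omega))).le <;> simp only [Finset.mem_Icc] <;> omega

lemma eq_Icc_of_window_midpoints
    (hmono : ∀ i j : ℕ, 1 ≤ i → i < j → j ≤ C → X i < X j)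
    (hA : A ⊆ Finset.Icc 1 C) (hAcard : A.card = K)
    (hnear : ∀ a ∈ A, ∀ b ∈ Finset.Icc 1 C, b ∉ A → |y - X a| < |y - X b|)
    (hi : 1 ≤ i) (hi' : i ≤ C - K + 1)
    (hlow : 1 < i → (X (i - 1) + X (i + K - 1)) / 2 < y)
    (hup : i ≤ C - K → y ≤ (X i + X (i + K)) / 2) :
    A = Finset.Icc i (i + K - 1) := by
  have hcard : (Finset.Icc i (i + K - 1)).card = A.card := by rw [Nat.card_Icc, hAcard]; omega
  refine Finset.eq_of_subset_of_card_le (fun a haA => ?_) hcard.le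
  by_contra haI
  obtain ⟨b, hbI, hbA⟩ : ∃ b ∈ Finset.Icc i (i + K - 1), b ∉ A := Finset.not_subset.mp
    fun hIA => haI (Finset.eq_of_subset_of_card_le hIA hcard.ge ▸ haA)
  have haC := Finset.mem_Icc.mp (hA haA)
  simp only [Finset.mem_Icc, not_and_or, not_le] at haI hbI
  have hbC : b ∈ Finset.Icc 1 C := Finset.mem_Icc.mpr ⟨by omega, by omega⟩
  rcases haI with hai | hai
  · have := lt_midpoint_of_mem_of_notMem hnear haA hbC hbA (hmono a b haC.1 (by omega) (by omega))
    linarith [hlow (by omega), le_of_strictMono_Icc hmono haC.1 (by omega : a ≤ i - 1) (by omega),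
      le_of_strictMono_Icc hmono (by omega) (by omega : b ≤ i + K - 1) (by omega)]
  · have := midpoint_lt_of_mem_of_notMem hnear haA hbC hbA (hmono b a (by omega) (by omega) haC.2)
    linarith [hup (by omega), le_of_strictMono_Icc hmono hi (by omega : i ≤ b) (by omega),
      le_of_strictMono_Icc hmono (by omega) (by omega : i + K ≤ a) haC.2]

end NearestSet

theorem stmt11_general (C K : ℕ) (hK : 0 < K) (X : ℕ → ℝ)
    (hmono : ∀ i j : ℕ, 1 ≤ i → i < j → j ≤ C → X i < X j)
    (y : ℝ)
    (A : Finset ℕ) (hA : A ⊆ Finset.Icc 1 C) (hAcard : A.card = K)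
    (hnear : ∀ a ∈ A, ∀ b ∈ Finset.Icc 1 C, b ∉ A → |y - X a| < |y - X b|)
    (i : ℕ) (hi : 1 ≤ i) (hi' : i ≤ C - K + 1) :
    A = Finset.Icc i (i + K - 1) ↔
      ((1 < i → (X (i - 1) + X (i + K - 1)) / 2 < y) ∧
       (i ≤ C - K → y ≤ (X i + X (i + K)) / 2)) :=
  ⟨window_midpoints_of_eq_Icc hK hmono hnear hi hi',
    fun ⟨hlow, hup⟩ => eq_Icc_of_window_midpoints hmono hA hAcard hnear hi hi' hlow hup⟩

/-- Region decomposition for the user-centric algorithm in `D = 2` (angular coordinates):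
with creators at sorted positions `X₁ < ⋯ < X_C` in `[0,1]` and a user at `y ∈ [0,1]`
assigned to the `K` strictly nearest creators `A`, we have `A = {i, …, i+K-1}` iff
`y` lies in the region `R_i` (with midpoint boundaries). -/
theorem stmt11 (C K : ℕ) (hK : 0 < K) (hKC : K < C) (X : ℕ → ℝ)
    (hmono : ∀ i j : ℕ, 1 ≤ i → i < j → j ≤ C → X i < X j)
    (hrange : ∀ i : ℕ, 1 ≤ i → i ≤ C → X i ∈ Set.Icc (0 : ℝ) 1)
    (y : ℝ) (hy : y ∈ Set.Icc (0 : ℝ) 1)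
    (A : Finset ℕ) (hA : A ⊆ Finset.Icc 1 C) (hAcard : A.card = K)
    (hnear : ∀ a ∈ A, ∀ b ∈ Finset.Icc 1 C, b ∉ A → |y - X a| < |y - X b|)
    (i : ℕ) (hi : 1 ≤ i) (hi' : i ≤ C - K + 1) :
    A = Finset.Icc i (i + K - 1) ↔
      ((1 < i → (X (i - 1) + X (i + K - 1)) / 2 < y) ∧
       (i ≤ C - K → y ≤ (X i + X (i + K)) / 2)) :=
  stmt11_general C K hK X hmono y A hA hAcard hnear i hi hi'
end

section
/- In the setting of the previous region decomposition with U = rC users, creator audience threshold ā = rK, and K > C/2, let U_i be the number of users in region R_i and a_j the audience of creator j, so a_j = U₁+⋯+U_j for j ≤ C−K, a_j = U for C−K+1 ≤ j ≤ K, and a_j = U_{j−K+1}+⋯+U_{C−K+1} for j ≥ K+1. Then: (1) the set of creators with a_j ≥ ā forms a contiguous interval {i, …, j} of indices; and (2) for any i ∈ [1, C−K], creators i and i+K cannot both satisfy their thresholds, hence at most K creators survive. -/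
/-!
The audience profile `a` rises (prefix sums), then sits at `U = rC ≥ rK`, then falls (suffix
sums), so every superlevel set of `a` is an interval. Creators `i` and `i + K` split the
regions between them: `a i + a (i + K) = U = rC < 2rK`, so they cannot both reach `rK`.
Pairing each `j ≤ K` with `j + K` then caps the number of survivors at `K`.
-/

open Finset

theorem le_of_le_of_le_of_monotoneOn_of_antitoneOn {α : Type*} [Preorder α] {a : ℕ → α}
    {t : α} {p q C : ℕ} (hmono : MonotoneOn a (Set.Icc 1 p))
    (hmid : ∀ j, p < j → j ≤ q → t ≤ a j) (hanti : AntitoneOn a (Set.Icc (q + 1) C))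
    {i j l : ℕ} (hi : 1 ≤ i) (hij : i ≤ j) (hjl : j ≤ l) (hl : l ≤ C)
    (hai : t ≤ a i) (hal : t ≤ a l) : t ≤ a j := by
  rcases le_or_gt j p with hjp | hpj
  · exact hai.trans (hmono ⟨hi, hij.trans hjp⟩ ⟨hi.trans hij, hjp⟩ hij)
  rcases le_or_gt j q with hjq | hqj
  · exact hmid j hpj hjq
  · exact hal.trans (hanti ⟨hqj, hjl.trans hl⟩ ⟨hqj.trans_le hjl, hl⟩ hjl)

theorem sum_Icc_one_add_sum_Icc_add_one {M : Type*} [AddCommMonoid M] (f : ℕ → M)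
    {i n : ℕ} (hin : i ≤ n) :
    ∑ k ∈ Icc 1 i, f k + ∑ k ∈ Icc (i + 1) n, f k = ∑ k ∈ Icc 1 n, f k := by
  simpa only [← Icc_add_one_left_eq_Ioc, zero_add] using
    sum_Ioc_consecutive f (Nat.zero_le i) hin

theorem card_le_of_forall_add_notMem {S : Finset ℕ} {K : ℕ} (hS : S ⊆ Icc 1 (2 * K))
    (hpair : ∀ j ∈ S, j + K ∉ S) : #S ≤ K := by
  have hmaps : Set.MapsTo (fun j => if j ≤ K then j else j - K) S (Icc 1 K) := by
    intro j hj
    have := mem_Icc.1 (hS hj)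
    simp only [coe_Icc, Set.mem_Icc]
    split_ifs <;> omega
  have hinj : Set.InjOn (fun j => if j ≤ K then j else j - K) S := by
    intro j hj j' hj' heq
    dsimp only at heq
    have := mem_Icc.1 (hS hj)
    have := mem_Icc.1 (hS hj')
    split_ifs at heq with h h'
    · exact heq
    · exact absurd (show j + K = j' by omega ▸ hj') (hpair j hj)
    · exact absurd (show j' + K = j by omega ▸ hj) (hpair j' hj')
    · omega
  simpa using card_le_card_of_injOn _ hmaps hinj

/-- With `U = rC` users, threshold `ā = rK`, and `K > C/2`: letting `U_i` be the number
of users in region `R_i` and `a_j` the audience of creator `j` (prefix sums for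
`j ≤ C-K`, all users for `C-K+1 ≤ j ≤ K`, suffix sums for `j ≥ K+1`), the set of
surviving creators (`a_j ≥ ā`) is a contiguous interval, creators `i` and `i+K` can
never both survive, and at most `K` creators survive. -/
theorem stmt12 (r C K : ℕ) (hr : 0 < r) (hKC : K < C) (h2K : C < 2 * K)
    (Un : ℕ → ℕ) (a : ℕ → ℕ)
    (hsum : ∑ i ∈ Finset.Icc 1 (C - K + 1), Un i = r * C)
    (ha1 : ∀ j, 1 ≤ j → j ≤ C - K → a j = ∑ i ∈ Finset.Icc 1 j, Un i)
    (ha2 : ∀ j, C - K + 1 ≤ j → j ≤ K → a j = r * C)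
    (ha3 : ∀ j, K + 1 ≤ j → j ≤ C →
      a j = ∑ i ∈ Finset.Icc (j - K + 1) (C - K + 1), Un i) :
    (∀ i j l : ℕ, 1 ≤ i → i ≤ j → j ≤ l → l ≤ C →
        r * K ≤ a i → r * K ≤ a l → r * K ≤ a j) ∧
    (∀ i : ℕ, 1 ≤ i → i ≤ C - K → ¬(r * K ≤ a i ∧ r * K ≤ a (i + K))) ∧
    ((Finset.Icc 1 C).filter (fun j => r * K ≤ a j)).card ≤ K := by
  have hmono : MonotoneOn a (Set.Icc 1 (C - K)) := by
    rintro i ⟨hi, hiC⟩ j ⟨hj, hjC⟩ hij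
    rw [ha1 i hi hiC, ha1 j hj hjC]
    exact sum_le_sum_of_subset (Icc_subset_Icc le_rfl hij)
  have hanti : AntitoneOn a (Set.Icc (K + 1) C) := by
    rintro i ⟨hi, hiC⟩ j ⟨hj, hjC⟩ hij
    rw [ha3 i hi hiC, ha3 j hj hjC]
    exact sum_le_sum_of_subset (Icc_subset_Icc (by omega) le_rfl)
  have hmid : ∀ j, C - K < j → j ≤ K → r * K ≤ a j := fun j hj hjK => by
    rw [ha2 j hj hjK]
    exact Nat.mul_le_mul_left r hKC.le
  have hsplit : ∀ i, 1 ≤ i → i ≤ C - K → a i + a (i + K) = r * C := by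
    intro i hi hiC
    rw [ha1 i hi hiC, ha3 (i + K) (by omega) (by omega), Nat.add_sub_cancel, ← hsum]
    exact sum_Icc_one_add_sum_Icc_add_one Un (by omega)
  have hcap : r * C < r * K + r * K := by
    rw [← mul_add]
    exact Nat.mul_lt_mul_of_pos_left (by omega) hr
  have hnot : ∀ i, 1 ≤ i → i ≤ C - K → ¬(r * K ≤ a i ∧ r * K ≤ a (i + K)) := by
    rintro i hi hiC ⟨hai, haiK⟩
    have := hsplit i hi hiC
    omega
  refine ⟨fun i j l hi hij hjl hl =>
    le_of_le_of_le_of_monotoneOn_of_antitoneOn hmono hmid hanti hi hij hjl hl, hnot, ?_⟩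
  refine card_le_of_forall_add_notMem (fun j hj => ?_) fun j hj hjK => ?_
  · have := mem_Icc.1 (mem_filter.1 hj).1
    exact mem_Icc.2 ⟨this.1, by omega⟩
  · obtain ⟨hjC, hj⟩ := mem_filter.1 hj
    obtain ⟨hjKC, hjK⟩ := mem_filter.1 hjK
    exact hnot j (mem_Icc.1 hjC).1 (by have := (mem_Icc.1 hjKC).2; omega) ⟨hj, hjK⟩
end

section
/- Let d ∈ (0, 2] and consider finitely many points (users) in the type space S = {x ∈ R^D_{≥0} : ‖x‖ = 1}, together with a matching in which some users are 'assigned'. Suppose every assigned group lies within a common neighborhood ball of effective diameter d, every ball centered at a representative (assigned) user contains at least ā users and all of them are assigned, and every ball centered at an unassigned user contains at most ā−1 unassigned users. If every user lies in a large ball (radius d) around some representative, and each ring (large ball minus neighborhood ball) contains at most M(ā−1) unassigned users, then the fraction of assigned users is at least ā / (ā + M(ā−1)) ≥ 1/(1+M). -/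
/-!
Every unassigned user lies in the ring of some representative, so there are at most
`|Reps| · M(ā-1)` of them; the disjoint neighborhood balls hold `≥ ā` assigned users each,
so `|Reps| · ā ≤ |Assigned|`. Eliminating `|Reps|` between the two bounds gives the ratio.
-/

open Finset

lemma Finset.card_mul_le_card_of_pairwiseDisjoint {α ι : Type*} [DecidableEq α]
    {s : Finset α} {I : Finset ι} {t : ι → Finset α} {n : ℕ}
    (hts : ∀ i ∈ I, t i ⊆ s) (hdisj : (I : Set ι).PairwiseDisjoint t)
    (hcard : ∀ i ∈ I, n ≤ #(t i)) :
    #I * n ≤ #s :=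
  calc #I * n = ∑ _i ∈ I, n := by rw [sum_const, smul_eq_mul]
    _ ≤ ∑ i ∈ I, #(t i) := sum_le_sum hcard
    _ = #(I.biUnion t) := (card_biUnion hdisj).symm
    _ ≤ #s := card_le_card (biUnion_subset.mpr hts)

lemma Nat.counting_ratio_bound {U A R a M : ℕ} (hU : U ≤ A + R * (M * (a - 1)))
    (hA : R * a ≤ A) :
    U * a ≤ A * (a + M * (a - 1)) ∧ U ≤ A * (1 + M) := by
  have hR : R * (a - 1) ≤ A := (Nat.mul_le_mul_left R (Nat.sub_le a 1)).trans hA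
  constructor
  · nlinarith [Nat.mul_le_mul_right a hU, Nat.mul_le_mul_right (M * (a - 1)) hA]
  · nlinarith [Nat.mul_le_mul_left M hR]

theorem stmt15_general {α ι : Type*} [DecidableEq α] (Users Assigned : Finset α)
    (Reps : Finset ι) (NB LB : ι → Finset α) (abar M : ℕ)
    (hAU : Assigned ⊆ Users)
    (hcover : ∀ u ∈ Users, ∃ k ∈ Reps, u ∈ LB k)
    (hNBassigned : ∀ k ∈ Reps, NB k ⊆ Assigned)
    (hNBdisj : ∀ k ∈ Reps, ∀ l ∈ Reps, k ≠ l → Disjoint (NB k) (NB l))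
    (hNBcard : ∀ k ∈ Reps, abar ≤ (NB k).card)
    (hring : ∀ k ∈ Reps,
      (((LB k \ NB k) ∩ (Users \ Assigned))).card ≤ M * (abar - 1)) :
    Users.card * abar ≤ Assigned.card * (abar + M * (abar - 1)) ∧
    Users.card ≤ Assigned.card * (1 + M) := by
  have hunassigned_in_rings :
      Users \ Assigned ⊆ Reps.biUnion fun k => (LB k \ NB k) ∩ (Users \ Assigned) := by
    intro u hu
    obtain ⟨huU, huA⟩ := mem_sdiff.mp hu
    obtain ⟨k, hk, huLB⟩ := hcover u huU
    exact mem_biUnion.mpr ⟨k, hk, mem_inter.mpr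
      ⟨mem_sdiff.mpr ⟨huLB, fun huNB => huA (hNBassigned k hk huNB)⟩, hu⟩⟩
  have hunassigned : #(Users \ Assigned) ≤ #Reps * (M * (abar - 1)) :=
    (card_le_card hunassigned_in_rings).trans (card_biUnion_le_card_mul _ _ _ hring)
  rw [card_sdiff_of_subset hAU] at hunassigned
  have hassigned : #Reps * abar ≤ #Assigned :=
    card_mul_le_card_of_pairwiseDisjoint hNBassigned hNBdisj hNBcard
  exact Nat.counting_ratio_bound (by omega) hassigned

/-- Counting argument for the Local Clustering algorithm: if every user lies in a large
ball of some representative, assigned users are partitioned into disjoint neighborhood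
balls each containing at least `ā` (assigned) users, and each ring (large ball minus
neighborhood ball) contains at most `M(ā-1)` unassigned users, then the fraction of
assigned users is at least `ā / (ā + M(ā-1)) ≥ 1/(1+M)`. -/
theorem stmt15 {α ι : Type*} [DecidableEq α] (Users Assigned : Finset α)
    (Reps : Finset ι) (NB LB : ι → Finset α) (abar M : ℕ)
    (hAU : Assigned ⊆ Users)
    (hNBLB : ∀ k ∈ Reps, NB k ⊆ LB k)
    (hLBU : ∀ k ∈ Reps, LB k ⊆ Users)
    (hcover : ∀ u ∈ Users, ∃ k ∈ Reps, u ∈ LB k)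
    (hNBassigned : ∀ k ∈ Reps, NB k ⊆ Assigned)
    (hNBdisj : ∀ k ∈ Reps, ∀ l ∈ Reps, k ≠ l → Disjoint (NB k) (NB l))
    (hNBcard : ∀ k ∈ Reps, abar ≤ (NB k).card)
    (hAssignedUnion : ∀ u ∈ Assigned, ∃ k ∈ Reps, u ∈ NB k)
    (hring : ∀ k ∈ Reps,
      (((LB k \ NB k) ∩ (Users \ Assigned))).card ≤ M * (abar - 1)) :
    Users.card * abar ≤ Assigned.card * (abar + M * (abar - 1)) ∧
    Users.card ≤ Assigned.card * (1 + M) :=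
  stmt15_general Users Assigned Reps NB LB abar M hAU hcover hNBassigned hNBdisj hNBcard hring
end
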